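/- arXiv:2001.00850 — 9 statements merged into one kernel-verified Lean document; each statement's English description precedes it below -/
import Mathlib

section
/- Let n ≥ 2 and let P=(a,a') and Q=(b,b') be points of F₀(ℝⁿ,2). Then δ = 0 if and only if k is a negative scalar multiple of h, i.e., there exists c < 0 with k = c·h. -/
/-!
The difference of the two components along the linear path is `(1 - t) • (a - a') + t • (b - b')`,
so by compactness `δ = 0` exactly when `0` lies on the segment `[a - a', b - b']`; for two nonzero
vectors this says that `-(a - a')` and `b - b'` lie on the same ray.
-/

open Set

theorem IsCompact.sInf_image_norm_eq_zero_iff {X E : Type*} [TopologicalSpace X]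
    [NormedAddCommGroup E] {s : Set X} (hs : IsCompact s) (hne : s.Nonempty) {g : X → E}
    (hg : ContinuousOn g s) :
    sInf ((fun x => ‖g x‖) '' s) = 0 ↔ ∃ x ∈ s, g x = 0 := by
  constructor
  · intro h
    have hmem := (hs.image_of_continuousOn (continuous_norm.comp_continuousOn hg)).sInf_mem
      (hne.image _)
    obtain ⟨x, hx, hgx⟩ := h ▸ hmem
    exact ⟨x, hx, norm_eq_zero.1 hgx⟩
  · rintro ⟨x, hx, hgx⟩
    refine IsLeast.csInf_eq ⟨⟨x, hx, by simp [hgx]⟩, ?_⟩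
    rintro _ ⟨y, -, rfl⟩
    exact norm_nonneg _

theorem zero_mem_segment_iff_exists_neg_smul {𝕜 E : Type*} [Field 𝕜] [LinearOrder 𝕜]
    [IsStrictOrderedRing 𝕜] [AddCommGroup E] [Module 𝕜 E] {u v : E} (hu : u ≠ 0) (hv : v ≠ 0) :
    (0 : E) ∈ segment 𝕜 u v ↔ ∃ c : 𝕜, c < 0 ∧ v = c • u := by
  rw [mem_segment_iff_sameRay, zero_sub, sub_zero,
    ← exists_pos_left_iff_sameRay (neg_ne_zero.2 hu) hv]
  constructor
  · rintro ⟨r, hr, rfl⟩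
    exact ⟨-r, neg_neg_of_pos hr, by rw [neg_smul, smul_neg]⟩
  · rintro ⟨c, hc, rfl⟩
    exact ⟨-c, neg_pos.2 hc, by rw [neg_smul, smul_neg, neg_neg]⟩

theorem stmt1_general {n : ℕ} (a a' b b' : EuclideanSpace ℝ (Fin n))
    (hP : 2 ≤ ‖a - a'‖) (hQ : 2 ≤ ‖b - b'‖) :
    sInf ((fun t : ℝ => ‖(t • b + (1 - t) • a) - (t • b' + (1 - t) • a')‖) '' Set.Icc 0 1) = 0
      ↔ ∃ c : ℝ, c < 0 ∧ (2:ℝ)⁻¹ • (b' - b) = c • ((2:ℝ)⁻¹ • (a' - a)) := by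
  have hu : a - a' ≠ 0 := norm_pos_iff.1 (by linarith)
  have hv : b - b' ≠ 0 := norm_pos_iff.1 (by linarith)
  have hpath : ∀ t : ℝ, (t • b + (1 - t) • a) - (t • b' + (1 - t) • a')
      = (1 - t) • (a - a') + t • (b - b') := fun t => by module
  have hhalf : ∀ c : ℝ, (2:ℝ)⁻¹ • (b' - b) = c • ((2:ℝ)⁻¹ • (a' - a)) ↔ b - b' = c • (a - a') :=
    fun c => by
      rw [smul_comm c, (smul_right_injective _ (by norm_num : (2:ℝ)⁻¹ ≠ 0)).eq_iff, ← neg_sub b,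
        ← neg_sub a, smul_neg, neg_inj]
  rw [isCompact_Icc.sInf_image_norm_eq_zero_iff (nonempty_Icc.2 zero_le_one) (by fun_prop)]
  simp_rw [hpath, hhalf]
  rw [← zero_mem_segment_iff_exists_neg_smul hu hv, segment_eq_image, mem_image]

/-- For `P = (a,a')`, `Q = (b,b')` in `F₀(ℝⁿ,2)`, the minimal distance `δ` between the two
components of the linear path from `P` to `Q` is `0` iff `k = (b'-b)/2` is a negative scalar
multiple of `h = (a'-a)/2`. -/
theorem stmt1 {n : ℕ} (hn : 2 ≤ n) (a a' b b' : EuclideanSpace ℝ (Fin n))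
    (hP : 2 ≤ ‖a - a'‖) (hQ : 2 ≤ ‖b - b'‖) :
    sInf ((fun t : ℝ => ‖(t • b + (1 - t) • a) - (t • b' + (1 - t) • a')‖) '' Set.Icc 0 1) = 0
      ↔ ∃ c : ℝ, c < 0 ∧ (2:ℝ)⁻¹ • (b' - b) = c • ((2:ℝ)⁻¹ • (a' - a)) :=
  stmt1_general a a' b b' hP hQ
end

section
/- Let u and v be unit vectors in ℝⁿ and let α ∈ [0,π) be the angle between them (so cos α = u·v). For 0 ≤ t ≤ 1 set u(t) = (sin((1−t)α)·u + sin(tα)·v)/sin α if α > 0, and u(t) = u if α = 0. For x, y ∈ ℝⁿ define σ(t) = ((1−t)x+ty−u(t), (1−t)x+ty+u(t)). Then for every t ∈ [0,1]: (i) ‖u(t)‖ = 1, so σ(t) lies in the boundary ∂F₀ = {(z−w, z+w) : z ∈ ℝⁿ, ‖w‖ = 1} of F₀(ℝⁿ,2); (ii) ‖σ'(t)‖² = 2(‖x−y‖² + α²); and consequently (iii) the length of the curve σ is √(2(‖x−y‖² + α²)). -/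
open scoped RealInnerProductSpace ENNReal

/-- The pair `(x, y) ∈ ℝⁿ × ℝⁿ` viewed in `ℝ²ⁿ` with the Euclidean (`L²`) metric. -/
noncomputable def toL2 {n : ℕ} (x y : EuclideanSpace ℝ (Fin n)) :
    WithLp 2 (EuclideanSpace ℝ (Fin n) × EuclideanSpace ℝ (Fin n)) :=
  (WithLp.equiv 2 (EuclideanSpace ℝ (Fin n) × EuclideanSpace ℝ (Fin n))).symm (x, y)

/-- `F₀(ℝⁿ,2) = {(x,xp) : ‖x - xp‖ ≥ 2}` as a subset of `ℝ²ⁿ` with the Euclidean metric. -/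
def F0 (n : ℕ) : Set (WithLp 2 (EuclideanSpace ℝ (Fin n) × EuclideanSpace ℝ (Fin n))) :=
  {p | 2 ≤ ‖(WithLp.equiv 2 (EuclideanSpace ℝ (Fin n) × EuclideanSpace ℝ (Fin n)) p).1 -
        (WithLp.equiv 2 (EuclideanSpace ℝ (Fin n) × EuclideanSpace ℝ (Fin n)) p).2‖}


instance {n : ℕ} : ContinuousSMul ℝ (WithLp 2 (EuclideanSpace ℝ (Fin n) × EuclideanSpace ℝ (Fin n))) :=
  IsBoundedSMul.continuousSMul

/-!
Write `σ(t) = (c(t) - u(t), c(t) + u(t))` with `c` affine. By the parallelogram law,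
`‖σ(s) - σ(t)‖² = 2 (‖c(s) - c(t)‖² + ‖u(s) - u(t)‖²)`. In the orthonormal frame `u, e` of
`span {u, v}` the slerp is the great circle `u(t) = cos (tα) u + sin (tα) e`, whose chords are
`2 |sin ((s - t) α / 2)|` and whose speed is `α`. Hence `σ` has constant speed
`√(2 (‖x - y‖² + α²))`: the mean value inequality bounds the variation from above, and the chord
formula shows that the inscribed uniform polygons have lengths tending to the same value.
-/

open Real Set Filter Topology

theorem Real.mul_sinc (x : ℝ) : x * sinc x = sin x := by
  rcases eq_or_ne x 0 with rfl | hx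
  · simp
  rw [sinc_of_ne_zero hx, mul_div_cancel₀ _ hx]

theorem Real.sin_ne_zero_of_abs_lt_pi {α : ℝ} (hα : |α| < π) (h0 : α ≠ 0) : sin α ≠ 0 :=
  fun h ↦ h0 ((sin_eq_zero_iff_of_lt_of_lt (abs_lt.1 hα).1 (abs_lt.1 hα).2).1 h)

section GreatCircle

variable {E : Type*} [NormedAddCommGroup E] [InnerProductSpace ℝ E] {u e : E}

noncomputable def greatCircle (u e : E) (θ : ℝ) : E := cos θ • u + sin θ • e

theorem hasDerivAt_greatCircle (u e : E) (θ : ℝ) :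
    HasDerivAt (greatCircle u e) (greatCircle u e (θ + π / 2)) θ := by
  rw [greatCircle, cos_add_pi_div_two, sin_add_pi_div_two]
  exact ((hasDerivAt_cos θ).smul_const u).add ((hasDerivAt_sin θ).smul_const e)

variable (hu : ‖u‖ = 1) (he : ‖e‖ = 1) (hue : ⟪u, e⟫ = 0)
include hu he hue

theorem inner_greatCircle (θ φ : ℝ) :
    ⟪greatCircle u e θ, greatCircle u e φ⟫ = cos (θ - φ) := by
  simp only [greatCircle, inner_add_left, inner_add_right, real_inner_smul_left,
    real_inner_smul_right, real_inner_self_eq_norm_sq, hu, he, hue, real_inner_comm u e, cos_sub]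
  ring

theorem norm_greatCircle (θ : ℝ) : ‖greatCircle u e θ‖ = 1 := by
  have h := inner_greatCircle hu he hue θ θ
  rw [sub_self, cos_zero, real_inner_self_eq_norm_sq] at h
  exact (pow_eq_one_iff_of_nonneg (norm_nonneg _) two_ne_zero).1 h

theorem norm_greatCircle_sub (θ φ : ℝ) :
    ‖greatCircle u e θ - greatCircle u e φ‖ = 2 * |sin ((θ - φ) / 2)| := by
  have hcos : cos (θ - φ) = 1 - 2 * sin ((θ - φ) / 2) ^ 2 := by
    rw [← cos_two_mul_eq_one_sub, mul_div_cancel₀ _ two_ne_zero]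
  refine (sq_eq_sq₀ (norm_nonneg _) (by positivity)).1 ?_
  rw [norm_sub_sq_real, norm_greatCircle hu he hue, norm_greatCircle hu he hue,
    inner_greatCircle hu he hue, hcos, mul_pow, sq_abs]
  ring

end GreatCircle

section Slerp

variable {E : Type*} [NormedAddCommGroup E] [InnerProductSpace ℝ E] {u v : E} {α : ℝ}

noncomputable def slerp (u v : E) (α t : ℝ) : E :=
  if α = 0 then u else (sin α)⁻¹ • (sin ((1 - t) * α) • u + sin (t * α) • v)

noncomputable def slerpTangent (u v : E) (α : ℝ) : E := (sin α)⁻¹ • (v - cos α • u)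

theorem inner_slerpTangent (hu : ‖u‖ = 1) (huv : ⟪u, v⟫ = cos α) :
    ⟪u, slerpTangent u v α⟫ = 0 := by
  simp [slerpTangent, inner_sub_right, real_inner_smul_right, hu, huv]

theorem norm_slerpTangent (hu : ‖u‖ = 1) (hv : ‖v‖ = 1) (huv : ⟪u, v⟫ = cos α)
    (hα : sin α ≠ 0) : ‖slerpTangent u v α‖ = 1 := by
  have h : ‖v - cos α • u‖ ^ 2 = sin α ^ 2 := by
    rw [norm_sub_sq_real, norm_smul, real_inner_smul_right, real_inner_comm, huv, hu, hv,
      norm_eq_abs, mul_one, sq_abs]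
    linear_combination -sin_sq_add_cos_sq α
  rw [slerpTangent, norm_smul, norm_inv, norm_eq_abs,
    (sq_eq_sq₀ (norm_nonneg _) (abs_nonneg _)).1 (h.trans (sq_abs _).symm),
    inv_mul_cancel₀ (abs_ne_zero.2 hα)]

theorem slerp_eq_greatCircle (hα : |α| < π) (t : ℝ) :
    slerp u v α t = greatCircle u (slerpTangent u v α) (t * α) := by
  rcases eq_or_ne α 0 with rfl | h0
  · simp [slerp, greatCircle]
  have := sin_ne_zero_of_abs_lt_pi hα h0
  rw [slerp, if_neg h0, greatCircle, slerpTangent, one_sub_mul, sin_sub]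
  match_scalars <;> field_simp
  ring

theorem hasDerivAt_slerp (hα : |α| < π) (t : ℝ) :
    HasDerivAt (slerp u v α) (α • greatCircle u (slerpTangent u v α) (t * α + π / 2)) t := by
  rw [funext (slerp_eq_greatCircle hα)]
  simpa [Function.comp_def] using (hasDerivAt_greatCircle u (slerpTangent u v α) (t * α)).scomp t
    ((hasDerivAt_id t).mul_const α)

variable (hu : ‖u‖ = 1) (hv : ‖v‖ = 1) (huv : ⟪u, v⟫ = cos α) (hα : |α| < π)
include hu hv huv hα

theorem norm_slerp (t : ℝ) : ‖slerp u v α t‖ = 1 := by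
  rcases eq_or_ne α 0 with rfl | h0
  · simpa [slerp] using hu
  rw [slerp_eq_greatCircle hα, norm_greatCircle hu
    (norm_slerpTangent hu hv huv (sin_ne_zero_of_abs_lt_pi hα h0)) (inner_slerpTangent hu huv)]

theorem norm_slerp_sub (s t : ℝ) :
    ‖slerp u v α s - slerp u v α t‖ = 2 * |sin ((s - t) * α / 2)| := by
  rcases eq_or_ne α 0 with rfl | h0
  · simp [slerp]
  rw [slerp_eq_greatCircle hα, slerp_eq_greatCircle hα, norm_greatCircle_sub hu
    (norm_slerpTangent hu hv huv (sin_ne_zero_of_abs_lt_pi hα h0)) (inner_slerpTangent hu huv),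
    sub_mul]

theorem norm_deriv_slerp (t : ℝ) : ‖deriv (slerp u v α) t‖ = |α| := by
  rw [(hasDerivAt_slerp hα t).deriv, norm_smul, norm_eq_abs]
  rcases eq_or_ne α 0 with rfl | h0
  · simp
  rw [norm_greatCircle hu (norm_slerpTangent hu hv huv (sin_ne_zero_of_abs_lt_pi hα h0))
    (inner_slerpTangent hu huv), mul_one]

end Slerp

section Variation

theorem eVariationOn_Icc_le_of_norm_deriv_le {E : Type*} [NormedAddCommGroup E]
    [NormedSpace ℝ E] {f : ℝ → E} {C a b : ℝ} (hab : a ≤ b)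
    (hf : ∀ t ∈ Icc a b, DifferentiableAt ℝ f t) (hC : ∀ t ∈ Icc a b, ‖deriv f t‖ ≤ C) :
    eVariationOn f (Icc a b) ≤ ENNReal.ofReal (C * (b - a)) := by
  have hC0 : 0 ≤ C := (norm_nonneg _).trans (hC a (left_mem_Icc.2 hab))
  have hlip : LipschitzOnWith C.toNNReal f (Icc a b) :=
    (convex_Icc a b).lipschitzOnWith_of_nnnorm_hasDerivWithin_le
      (fun t ht ↦ (hf t ht).hasDerivAt.hasDerivWithinAt)
      (fun t ht ↦ by rw [← NNReal.coe_le_coe, coe_nnnorm, Real.coe_toNNReal _ hC0]; exact hC t ht)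
  have hid : eVariationOn id (Icc a b) = ENNReal.ofReal (b - a) := by simp
  calc eVariationOn f (Icc a b) = eVariationOn (f ∘ id) (Icc a b) := rfl
    _ ≤ C.toNNReal * eVariationOn id (Icc a b) := hlip.comp_eVariationOn_le (mapsTo_id _)
    _ = ENNReal.ofReal (C * (b - a)) := by
      rw [hid, ENNReal.ofReal_mul hC0]
      rfl

theorem ofReal_mul_le_eVariationOn_Icc {E : Type*} [PseudoMetricSpace E] {f : ℝ → E}
    {k : ℝ → ℝ} {L a b : ℝ} (hab : a ≤ b)
    (hf : ∀ t h, 0 < h → dist (f (t + h)) (f t) = h * k h)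
    (hk : Tendsto k (𝓝[>] 0) (𝓝 L)) :
    ENNReal.ofReal (L * (b - a)) ≤ eVariationOn f (Icc a b) := by
  rcases hab.eq_or_lt with rfl | hab
  · simp
  have hstep : Tendsto (fun N : ℕ ↦ (b - a) / N) atTop (𝓝[>] 0) :=
    tendsto_nhdsWithin_iff.2 ⟨tendsto_const_div_atTop_nhds_zero_nat _,
      (eventually_gt_atTop 0).mono fun N hN ↦ div_pos (sub_pos.2 hab) (Nat.cast_pos.2 hN)⟩
  have hsum : ∀ N : ℕ, 0 < N →
      ENNReal.ofReal (k ((b - a) / N) * (b - a)) ≤ eVariationOn f (Icc a b) := by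
    intro N hN
    set δ := (b - a) / N
    have hδ : 0 < δ := div_pos (sub_pos.2 hab) (Nat.cast_pos.2 hN)
    have hNδ : (N : ℝ) * δ = b - a := mul_div_cancel₀ _ (Nat.cast_ne_zero.2 hN.ne')
    have hmono : MonotoneOn (fun i : ℕ ↦ a + i * δ) (Icc 0 N) := fun i _ j _ hij ↦ by
      dsimp only
      gcongr
    have hmem : ∀ i ∈ Icc 0 N, a + i * δ ∈ Icc a b := fun i hi ↦ by
      refine ⟨le_add_of_nonneg_right (by positivity), ?_⟩
      have : (i : ℝ) * δ ≤ N * δ := by gcongr; exact_mod_cast hi.2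
      linarith
    calc ENNReal.ofReal (k δ * (b - a))
        = ∑ i ∈ Finset.Ico 0 N, edist (f (a + ↑(i + 1) * δ)) (f (a + i * δ)) := by
          simp_rw [edist_dist, Nat.cast_succ, add_one_mul, ← add_assoc, hf _ δ hδ]
          rw [Finset.sum_const, Nat.card_Ico, Nat.sub_zero, ← ENNReal.ofReal_nsmul, nsmul_eq_mul,
            ← mul_assoc, hNδ, mul_comm]
      _ ≤ eVariationOn f (Icc a b) := eVariationOn.sum_le_of_monotoneOn_Icc hmono hmem
  refine le_of_tendsto (ENNReal.tendsto_ofReal ((hk.comp hstep).mul_const (b - a))) ?_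
  filter_upwards [eventually_gt_atTop 0] with N hN using hsum N hN

end Variation

section BoundaryCurve

variable {n : ℕ}

theorem toL2_sub (a b c d : EuclideanSpace ℝ (Fin n)) :
    toL2 a b - toL2 c d = toL2 (a - c) (b - d) := rfl

theorem norm_toL2_sub_add (a b : EuclideanSpace ℝ (Fin n)) :
    ‖toL2 (a - b) (a + b)‖ = √(2 * (‖a‖ ^ 2 + ‖b‖ ^ 2)) := by
  rw [← sqrt_sq (norm_nonneg _), WithLp.prod_norm_sq_eq_of_L2]
  change √(‖a - b‖ ^ 2 + ‖a + b‖ ^ 2) = _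
  rw [norm_sub_sq_real, norm_add_sq_real]
  congr 1
  ring

theorem dist_toL2_sub_add (a b a' b' : EuclideanSpace ℝ (Fin n)) :
    dist (toL2 (a - b) (a + b)) (toL2 (a' - b') (a' + b')) =
      √(2 * (‖a - a'‖ ^ 2 + ‖b - b'‖ ^ 2)) := by
  rw [dist_eq_norm, toL2_sub, ← norm_toL2_sub_add, sub_sub_sub_comm, add_sub_add_comm]

theorem HasDerivAt.toL2 {p q : ℝ → EuclideanSpace ℝ (Fin n)} {p' q' : EuclideanSpace ℝ (Fin n)}
    {t : ℝ} (hp : HasDerivAt p p' t) (hq : HasDerivAt q q' t) :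
    HasDerivAt (fun s ↦ toL2 (p s) (q s)) (toL2 p' q') t :=
  (WithLp.prodContinuousLinearEquiv 2 ℝ (EuclideanSpace ℝ (Fin n))
    (EuclideanSpace ℝ (Fin n))).symm.hasFDerivAt.comp_hasDerivAt t (hp.prodMk hq)

noncomputable def boundaryCurve (x y u v : EuclideanSpace ℝ (Fin n)) (α t : ℝ) :
    WithLp 2 (EuclideanSpace ℝ (Fin n) × EuclideanSpace ℝ (Fin n)) :=
  toL2 ((1 - t) • x + t • y - slerp u v α t) ((1 - t) • x + t • y + slerp u v α t)

variable {x y u v : EuclideanSpace ℝ (Fin n)} {α : ℝ}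

theorem hasDerivAt_boundaryCurve (hα : |α| < π) (t : ℝ) :
    HasDerivAt (boundaryCurve x y u v α)
      (toL2 (y - x - deriv (slerp u v α) t) (y - x + deriv (slerp u v α) t)) t := by
  have hline : HasDerivAt (fun s : ℝ ↦ (1 - s) • x + s • y) (y - x) t :=
    (((hasDerivAt_id t).const_sub 1).smul_const x).add ((hasDerivAt_id t).smul_const y)
      |>.congr_deriv (by module)
  have hslerp := (hasDerivAt_slerp (u := u) (v := v) hα t).differentiableAt.hasDerivAt
  exact (hline.sub hslerp).toL2 (hline.add hslerp)

variable (hu : ‖u‖ = 1) (hv : ‖v‖ = 1) (huv : ⟪u, v⟫ = cos α) (hα : |α| < π)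
include hu hv huv hα

theorem norm_deriv_boundaryCurve (t : ℝ) :
    ‖deriv (boundaryCurve x y u v α) t‖ = √(2 * (‖x - y‖ ^ 2 + α ^ 2)) := by
  rw [(hasDerivAt_boundaryCurve hα t).deriv, norm_toL2_sub_add, norm_sub_rev,
    norm_deriv_slerp hu hv huv hα, sq_abs]

-- Stated through `sinc` so that the ratio of chord to step extends continuously to `h = 0`.
theorem dist_boundaryCurve_add (t : ℝ) {h : ℝ} (hh : 0 ≤ h) :
    dist (boundaryCurve x y u v α (t + h)) (boundaryCurve x y u v α t) =
      h * √(2 * (‖x - y‖ ^ 2 + (α * sinc (h * α / 2)) ^ 2)) := by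
  have hline : (1 - (t + h)) • x + (t + h) • y - ((1 - t) • x + t • y) = h • (y - x) := by
    module
  have hchord : (2 * |sin (h * α / 2)|) ^ 2 = h ^ 2 * (α * sinc (h * α / 2)) ^ 2 := by
    rw [mul_pow, sq_abs, ← mul_sinc]
    ring
  rw [boundaryCurve, boundaryCurve, dist_toL2_sub_add, hline, norm_slerp_sub hu hv huv hα,
    add_sub_cancel_left, hchord, norm_smul, norm_eq_abs, abs_of_nonneg hh, norm_sub_rev,
    mul_pow, ← mul_add, mul_left_comm 2 (h ^ 2), sqrt_mul (sq_nonneg h), sqrt_sq hh]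

end BoundaryCurve

/-- Proposition: for unit vectors `u, v` at angle `α ∈ [0,π)` and `x, y ∈ ℝⁿ`, the curve
`σ(t) = ((1-t)x+ty−u(t), (1-t)x+ty+u(t))`, where
`u(t) = (sin((1-t)α)u + sin(tα)v)/sin α` (and `u(t) = u` when `α = 0`), stays on the
boundary `∂F₀` (in particular `‖u(t)‖ = 1`), has derivative of squared norm
`2(‖x−y‖² + α²)` at each `t ∈ [0,1]`, and has length `√(2(‖x−y‖² + α²))`. -/
theorem stmt2 {n : ℕ} (u v : EuclideanSpace ℝ (Fin n)) (hu : ‖u‖ = 1) (hv : ‖v‖ = 1)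
    (α : ℝ) (hα0 : 0 ≤ α) (hαπ : α < Real.pi) (hcos : Real.cos α = ⟪u, v⟫)
    (x y : EuclideanSpace ℝ (Fin n))
    (ut : ℝ → EuclideanSpace ℝ (Fin n))
    (hut : ∀ t : ℝ, ut t = if α = 0 then u
      else (Real.sin α)⁻¹ • (Real.sin ((1 - t) * α) • u + Real.sin (t * α) • v))
    (σ : ℝ → WithLp 2 (EuclideanSpace ℝ (Fin n) × EuclideanSpace ℝ (Fin n)))
    (hσ : ∀ t : ℝ, σ t = toL2 (((1 - t) • x + t • y) - ut t) (((1 - t) • x + t • y) + ut t)) :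
    (∀ t ∈ Set.Icc (0:ℝ) 1, ‖ut t‖ = 1 ∧
      ∃ z w : EuclideanSpace ℝ (Fin n), ‖w‖ = 1 ∧ σ t = toL2 (z - w) (z + w)) ∧
    (∀ t ∈ Set.Icc (0:ℝ) 1,
      ∃ d : WithLp 2 (EuclideanSpace ℝ (Fin n) × EuclideanSpace ℝ (Fin n)),
        HasDerivAt σ d t ∧ ‖d‖ ^ 2 = 2 * (‖x - y‖ ^ 2 + α ^ 2)) ∧
    eVariationOn σ (Set.Icc 0 1)
      = ENNReal.ofReal (Real.sqrt (2 * (‖x - y‖ ^ 2 + α ^ 2))) := by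
  obtain rfl : ut = slerp u v α := funext hut
  obtain rfl : σ = boundaryCurve x y u v α := funext hσ
  have hα : |α| < π := abs_lt.2 ⟨by linarith [pi_pos], hαπ⟩
  have hderiv : ∀ t, DifferentiableAt ℝ (boundaryCurve x y u v α) t :=
    fun t ↦ (hasDerivAt_boundaryCurve hα t).differentiableAt
  have hspeed : ∀ t, ‖deriv (boundaryCurve x y u v α) t‖ = √(2 * (‖x - y‖ ^ 2 + α ^ 2)) :=
    norm_deriv_boundaryCurve hu hv hcos.symm hα
  have hk : Tendsto (fun h ↦ √(2 * (‖x - y‖ ^ 2 + (α * sinc (h * α / 2)) ^ 2))) (𝓝[>] 0)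
      (𝓝 √(2 * (‖x - y‖ ^ 2 + α ^ 2))) :=
    ((by fun_prop : Continuous _).tendsto' 0 _ (by simp)).mono_left nhdsWithin_le_nhds
  refine ⟨fun t _ ↦ ⟨norm_slerp hu hv hcos.symm hα t, _, _, norm_slerp hu hv hcos.symm hα t, rfl⟩,
    fun t _ ↦ ⟨_, (hderiv t).hasDerivAt, by rw [hspeed, sq_sqrt (by positivity)]⟩,
    le_antisymm ?_ ?_⟩
  · simpa using eVariationOn_Icc_le_of_norm_deriv_le zero_le_one (fun t _ ↦ hderiv t)
      (fun t _ ↦ (hspeed t).le)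
  · simpa using ofReal_mul_le_eVariationOn_Icc zero_le_one
      (fun t h hh ↦ dist_boundaryCurve_add hu hv hcos.symm hα t hh.le) hk
end

section
/- Let (a,a') ∈ F₀(ℝⁿ,2) and h = (a'−a)/2 (so ‖h‖ ≥ 1). Let u be a unit vector in ℝⁿ and x ∈ ℝⁿ. Then the straight segment in ℝ²ⁿ between (a,a') and (x−u, x+u) lies in F₀(ℝⁿ,2) if and only if h·u ≥ 1; that is, ‖(ta+(1−t)(x−u)) − (ta'+(1−t)(x+u))‖ ≥ 2 for all t ∈ [0,1] if and only if h·u ≥ 1. -/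
open scoped RealInnerProductSpace

/-- For `(a,a') ∈ F₀(ℝⁿ,2)`, `h = (a'-a)/2`, `u` a unit vector and `x ∈ ℝⁿ`, the straight
segment between `(a,a')` and `(x-u, x+u)` lies in `F₀(ℝⁿ,2)` iff `h·u ≥ 1`. -/
theorem stmt3 {n : ℕ} (a a' : EuclideanSpace ℝ (Fin n)) (ha : 2 ≤ ‖a - a'‖)
    (u x : EuclideanSpace ℝ (Fin n)) (hu : ‖u‖ = 1) :
    (∀ t ∈ Set.Icc (0:ℝ) 1,
        2 ≤ ‖(t • a + (1 - t) • (x - u)) - (t • a' + (1 - t) • (x + u))‖)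
      ↔ 1 ≤ ⟪(2:ℝ)⁻¹ • (a' - a), u⟫ := by
  set v := a - a' with hv
  set c := ⟪v, u⟫ with hc
  have key : ∀ t : ℝ, (t • a + (1 - t) • (x - u)) - (t • a' + (1 - t) • (x + u))
      = t • v - (2*(1-t)) • u := by
    intro t; rw [hv]; module
  have hnorm : ∀ t : ℝ, ‖t • v - (2*(1-t)) • u‖^2
      = t^2*‖v‖^2 - 4*t*(1-t)*c + 4*(1-t)^2 := by
    intro t
    rw [norm_sub_sq_real, real_inner_smul_left, real_inner_smul_right, norm_smul, norm_smul,
      hu, hc]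
    simp only [Real.norm_eq_abs, mul_pow, sq_abs]
    ring
  have h2 : ∀ w : EuclideanSpace ℝ (Fin n), 2 ≤ ‖w‖ ↔ 4 ≤ ‖w‖^2 := by
    intro w; constructor <;> intro h <;> nlinarith [norm_nonneg w]
  have hv2 : 4 ≤ ‖v‖^2 := by nlinarith [ha, norm_nonneg v]
  have hrhs : (1 ≤ ⟪(2:ℝ)⁻¹ • (a' - a), u⟫) ↔ c ≤ -2 := by
    have hva : a' - a = -v := by rw [hv]; abel
    rw [hva, real_inner_smul_left, inner_neg_left, ← hc]
    constructor <;> intro h <;> linarith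
  have hDval : ‖v + (2:ℝ) • u‖^2 = ‖v‖^2 + 4*c + 4 := by
    rw [norm_add_sq_real, real_inner_smul_right, norm_smul, hu, hc]
    simp only [Real.norm_eq_abs, mul_pow, sq_abs]
    norm_num; ring
  have hD : 0 ≤ ‖v + (2:ℝ) • u‖^2 := sq_nonneg _
  rw [hrhs]
  constructor
  · intro H
    by_contra hcc
    push_neg at hcc
    set D := ‖v + (2:ℝ) • u‖^2 with hDdef
    have hDpos : 0 < D := by rw [hDval]; linarith
    set t := min 1 (2*(c+2)/D) with htdef
    have ht0 : 0 < t := lt_min one_pos (div_pos (by linarith) hDpos)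
    have ht1 : t ≤ 1 := min_le_left _ _
    have htD : t * D ≤ 2*(c+2) := by
      calc t * D ≤ (2*(c+2)/D) * D :=
            mul_le_mul_of_nonneg_right (min_le_right _ _) hD
        _ = 2*(c+2) := div_mul_cancel₀ _ (ne_of_gt hDpos)
    have hH := H t ⟨ht0.le, ht1⟩
    rw [key t, h2, hnorm t] at hH
    have hprod : 0 < t * (c + 2) := mul_pos ht0 (by linarith)
    nlinarith [mul_le_mul_of_nonneg_left htD ht0.le, hDval, hH, hprod]
  · intro hcle t ht
    rw [key t, h2, hnorm t]
    nlinarith [hDval, mul_nonneg (mul_nonneg ht.1 ht.1) hD,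
      mul_nonneg ht.1 (by linarith : (0:ℝ) ≤ -(c+2)), ht.2]
end

section
/- Let u and v be unit vectors in ℝⁿ and let x, y ∈ ℝⁿ. Then the straight segment in ℝ²ⁿ between the boundary points (x−u, x+u) and (y−v, y+v) lies entirely in F₀(ℝⁿ,2) if and only if u = v. -/
open scoped RealInnerProductSpace

/-- For unit vectors `u, v` and `x, y ∈ ℝⁿ`, the straight segment in `ℝ²ⁿ` between the
boundary points `(x-u, x+u)` and `(y-v, y+v)` lies entirely in `F₀(ℝⁿ,2)` iff `u = v`. -/
theorem stmt4 {n : ℕ} (u v x y : EuclideanSpace ℝ (Fin n)) (hu : ‖u‖ = 1) (hv : ‖v‖ = 1) :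
    (∀ t ∈ Set.Icc (0:ℝ) 1,
        2 ≤ ‖((1 - t) • (x - u) + t • (y - v)) - ((1 - t) • (x + u) + t • (y + v))‖)
      ↔ u = v := by
  have key : ∀ t : ℝ, ((1 - t) • (x - u) + t • (y - v)) - ((1 - t) • (x + u) + t • (y + v))
      = -(2 : ℝ) • ((1 - t) • u + t • v) := by
    intro t
    simp only [smul_sub, smul_add, smul_smul]
    module
  constructor
  · intro h
    have h2 := h (1/2) (by norm_num)
    rw [key] at h2
    have : ((1:ℝ) - 1/2) • u + (1/2 : ℝ) • v = (1/2 : ℝ) • (u + v) := by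
      rw [smul_add]; norm_num
    rw [this, norm_smul, norm_smul] at h2
    simp only [norm_neg] at h2
    have huv : 2 ≤ ‖u + v‖ := by
      rw [show ‖(2 : ℝ)‖ = 2 by norm_num, show ‖(1/2 : ℝ)‖ = 1/2 by norm_num] at h2
      linarith
    have hsq : (4:ℝ) ≤ ‖u + v‖ ^ 2 := by nlinarith [norm_nonneg (u + v)]
    rw [norm_add_sq_real, hu, hv] at hsq
    have hinner : (1:ℝ) ≤ ⟪u, v⟫ := by nlinarith
    have hcs : ⟪u, v⟫ ≤ 1 := by
      have := real_inner_le_norm u v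
      rw [hu, hv] at this; linarith
    have heq : ⟪u, v⟫ = ‖u‖ * ‖v‖ := by rw [hu, hv]; linarith
    have := (inner_eq_norm_mul_iff_real).mp heq
    rw [hu, hv, one_smul, one_smul] at this
    exact this
  · intro h t ht
    subst h
    rw [key]
    have : ((1:ℝ) - t) • u + t • u = u := by module
    rw [this, norm_smul, hu]
    norm_num
end

section
/- Let P=(a,a') and Q=(b,b') be points of F₀(ℝⁿ,2) and set H=‖h‖², K=‖k‖², D=h·k. If min(H,K) ≤ D, then δ² = 4·min(H,K); in particular δ ≥ 2. -/
open scoped RealInnerProductSpace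

/-- Proposition: with `H = ‖h‖²`, `K = ‖k‖²`, `D = h·k`, if `min(H,K) ≤ D` then
`δ² = 4·min(H,K)`; in particular `δ ≥ 2`. -/
theorem stmt5 {n : ℕ} (a a' b b' h k : EuclideanSpace ℝ (Fin n))
    (hP : 2 ≤ ‖a - a'‖) (hQ : 2 ≤ ‖b - b'‖)
    (hdefh : h = (2:ℝ)⁻¹ • (a' - a)) (hdefk : k = (2:ℝ)⁻¹ • (b' - b))
    (hmin : min (‖h‖ ^ 2) (‖k‖ ^ 2) ≤ ⟪h, k⟫) :
    (sInf ((fun t : ℝ => ‖(t • b + (1 - t) • a) - (t • b' + (1 - t) • a')‖) ''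
        Set.Icc 0 1)) ^ 2 = 4 * min (‖h‖ ^ 2) (‖k‖ ^ 2) ∧
    2 ≤ sInf ((fun t : ℝ => ‖(t • b + (1 - t) • a) - (t • b' + (1 - t) • a')‖) ''
        Set.Icc 0 1) := by
  set f : ℝ → ℝ := fun t : ℝ => ‖(t • b + (1 - t) • a) - (t • b' + (1 - t) • a')‖ with hf
  set S := f '' Set.Icc (0:ℝ) 1 with hS
  have hsub : ∀ t : ℝ, (t • b + (1 - t) • a) - (t • b' + (1 - t) • a')
      = -((2:ℝ) • ((1 - t) • h + t • k)) := by
    intro t; rw [hdefh, hdefk]; module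
  have hnorm : ∀ t : ℝ, f t = 2 * ‖(1 - t) • h + t • k‖ := by
    intro t
    simp only [hf, hsub t, norm_neg, norm_smul, Real.norm_ofNat]
  have hh1 : (1:ℝ) ≤ ‖h‖ := by
    rw [hdefh, norm_smul]
    have : ‖a' - a‖ = ‖a - a'‖ := norm_sub_rev _ _
    rw [this]
    simp only [norm_inv, Real.norm_ofNat]
    nlinarith
  have hk1 : (1:ℝ) ≤ ‖k‖ := by
    rw [hdefk, norm_smul]
    have : ‖b' - b‖ = ‖b - b'‖ := norm_sub_rev _ _
    rw [this]
    simp only [norm_inv, Real.norm_ofNat]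
    nlinarith
  set m := min ‖h‖ ‖k‖ with hm
  have hm0 : 0 ≤ m := le_trans zero_le_one (le_min hh1 hk1)
  have hm2 : m ^ 2 = min (‖h‖ ^ 2) (‖k‖ ^ 2) := by
    rcases le_total ‖h‖ ‖k‖ with hc | hc
    · rw [hm, min_eq_left hc, min_eq_left (by nlinarith [norm_nonneg h] : ‖h‖^2 ≤ ‖k‖^2)]
    · rw [hm, min_eq_right hc, min_eq_right (by nlinarith [norm_nonneg k] : ‖k‖^2 ≤ ‖h‖^2)]
  -- key lower bound
  have hlow : ∀ t ∈ Set.Icc (0:ℝ) 1, m ≤ ‖(1 - t) • h + t • k‖ := by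
    rintro t ⟨ht0, ht1⟩
    have hexp : ‖(1 - t) • h + t • k‖ ^ 2
        = (1 - t) ^ 2 * ‖h‖ ^ 2 + 2 * ((1 - t) * t) * ⟪h, k⟫ + t ^ 2 * ‖k‖ ^ 2 := by
      rw [norm_add_sq_real, real_inner_smul_left, real_inner_smul_right,
        norm_smul, norm_smul, Real.norm_eq_abs, Real.norm_eq_abs]
      rw [mul_pow, mul_pow, sq_abs, sq_abs]
      ring
    have hsq : m ^ 2 ≤ ‖(1 - t) • h + t • k‖ ^ 2 := by
      rw [hexp, hm2]
      rcases le_total (‖h‖ ^ 2) (‖k‖ ^ 2) with hc | hc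
      · rw [min_eq_left hc]
        have hD : ‖h‖ ^ 2 ≤ ⟪h, k⟫ := by rw [min_eq_left hc] at hmin; exact hmin
        nlinarith [mul_nonneg (mul_nonneg ht0 (sub_nonneg.2 ht1)) (sub_nonneg.2 hD),
          mul_nonneg (mul_nonneg ht0 ht0) (sub_nonneg.2 hc)]
      · rw [min_eq_right hc]
        have hD : ‖k‖ ^ 2 ≤ ⟪h, k⟫ := by rw [min_eq_right hc] at hmin; exact hmin
        nlinarith [mul_nonneg (mul_nonneg ht0 (sub_nonneg.2 ht1)) (sub_nonneg.2 hD),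
          mul_nonneg (mul_nonneg (sub_nonneg.2 ht1) (sub_nonneg.2 ht1)) (sub_nonneg.2 hc)]
    nlinarith [norm_nonneg ((1 - t) • h + t • k)]
  have hne : S.Nonempty := ⟨f 0, ⟨0, ⟨le_refl 0, zero_le_one⟩, rfl⟩⟩
  have hbdd : BddBelow S := by
    refine ⟨2 * m, ?_⟩
    rintro s ⟨t, ht, rfl⟩
    rw [hnorm t]
    linarith [hlow t ht]
  have hge : 2 * m ≤ sInf S := by
    apply le_csInf hne
    rintro s ⟨t, ht, rfl⟩
    rw [hnorm t]
    linarith [hlow t ht]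
  have hle_h : sInf S ≤ 2 * ‖h‖ := by
    have : f 0 = 2 * ‖h‖ := by rw [hnorm 0]; norm_num
    calc sInf S ≤ f 0 := csInf_le hbdd ⟨0, ⟨le_refl 0, zero_le_one⟩, rfl⟩
      _ = 2 * ‖h‖ := this
  have hle_k : sInf S ≤ 2 * ‖k‖ := by
    have : f 1 = 2 * ‖k‖ := by rw [hnorm 1]; norm_num
    calc sInf S ≤ f 1 := csInf_le hbdd ⟨1, ⟨zero_le_one, le_refl 1⟩, rfl⟩
      _ = 2 * ‖k‖ := this
  have hinf : sInf S = 2 * m := by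
    refine le_antisymm ?_ hge
    rcases le_total ‖h‖ ‖k‖ with hc | hc
    · rw [hm, min_eq_left hc]; exact hle_h
    · rw [hm, min_eq_right hc]; exact hle_k
  constructor
  · rw [hinf]
    rw [← hm2]
    ring
  · rw [hinf]
    have : (1:ℝ) ≤ m := le_min hh1 hk1
    linarith
end

section
/- Let P=(a,a') and Q=(b,b') be points of F₀(ℝⁿ,2) and set H=‖h‖², K=‖k‖², D=h·k. If min(H,K) ≥ D and h ≠ k, then H+K−2D > 0 and δ² = 4(HK−D²)/(H+K−2D). -/
open scoped RealInnerProductSpace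

/-!
At time `t` on the segment from `P` to `Q` the difference of the two points is
`-2 (h + t (k - h))`. Completing the square in `t`,
`‖h + t (k - h)‖²` is minimal at `t₀ = (H - D)/(H + K - 2D)`, with minimum
`(HK - D²)/(H + K - 2D)`, and the hypothesis `D ≤ min(H, K)` says exactly that `t₀ ∈ [0, 1]`.
-/

section LineDistance

variable {E : Type*} [NormedAddCommGroup E] [InnerProductSpace ℝ E]

theorem norm_add_smul_sq_eq_of_ne_zero {v : E} (hv : v ≠ 0) (u : E) (t : ℝ) :
    ‖u + t • v‖ ^ 2 = (‖u‖ ^ 2 * ‖v‖ ^ 2 - ⟪u, v⟫ ^ 2) / ‖v‖ ^ 2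
      + ‖v‖ ^ 2 * (t - -⟪u, v⟫ / ‖v‖ ^ 2) ^ 2 := by
  have hv2 : ‖v‖ ^ 2 ≠ 0 := by positivity
  rw [norm_add_sq_real, norm_smul, real_inner_smul_right, mul_pow, Real.norm_eq_abs, sq_abs]
  field_simp
  ring

theorem norm_add_smul_sq_at_min {v : E} (hv : v ≠ 0) (u : E) :
    ‖u + (-⟪u, v⟫ / ‖v‖ ^ 2) • v‖ ^ 2 = (‖u‖ ^ 2 * ‖v‖ ^ 2 - ⟪u, v⟫ ^ 2) / ‖v‖ ^ 2 := by
  simp [norm_add_smul_sq_eq_of_ne_zero hv]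

theorem norm_add_smul_at_min_le {v : E} (hv : v ≠ 0) (u : E) (t : ℝ) :
    ‖u + (-⟪u, v⟫ / ‖v‖ ^ 2) • v‖ ≤ ‖u + t • v‖ := by
  rw [← pow_le_pow_iff_left₀ (norm_nonneg _) (norm_nonneg _) two_ne_zero,
    norm_add_smul_sq_at_min hv, norm_add_smul_sq_eq_of_ne_zero hv]
  exact le_add_of_nonneg_right (by positivity)

end LineDistance

theorem stmt6_general {n : ℕ} (a a' b b' h k : EuclideanSpace ℝ (Fin n))
    (hdefh : h = (2:ℝ)⁻¹ • (a' - a)) (hdefk : k = (2:ℝ)⁻¹ • (b' - b))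
    (hmin : ⟪h, k⟫ ≤ min (‖h‖ ^ 2) (‖k‖ ^ 2)) (hne : h ≠ k) :
    0 < ‖h‖ ^ 2 + ‖k‖ ^ 2 - 2 * ⟪h, k⟫ ∧
    (sInf ((fun t : ℝ => ‖(t • b + (1 - t) • a) - (t • b' + (1 - t) • a')‖) ''
        Set.Icc 0 1)) ^ 2
      = 4 * (‖h‖ ^ 2 * ‖k‖ ^ 2 - ⟪h, k⟫ ^ 2) / (‖h‖ ^ 2 + ‖k‖ ^ 2 - 2 * ⟪h, k⟫) := by
  have hv : k - h ≠ 0 := sub_ne_zero.2 hne.symm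
  have hnorm : ‖k - h‖ ^ 2 = ‖h‖ ^ 2 + ‖k‖ ^ 2 - 2 * ⟪h, k⟫ := by
    rw [norm_sub_sq_real, real_inner_comm]; ring
  have hinner : ⟪h, k - h⟫ = ⟪h, k⟫ - ‖h‖ ^ 2 := by
    rw [inner_sub_right, real_inner_self_eq_norm_sq]
  have hS : 0 < ‖h‖ ^ 2 + ‖k‖ ^ 2 - 2 * ⟪h, k⟫ := hnorm ▸ by positivity
  refine ⟨hS, ?_⟩
  have hseg (t : ℝ) : ‖(t • b + (1 - t) • a) - (t • b' + (1 - t) • a')‖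
      = 2 * ‖h + t • (k - h)‖ := by
    rw [show (t • b + (1 - t) • a) - (t • b' + (1 - t) • a') = (-2 : ℝ) • (h + t • (k - h)) by
      rw [hdefh, hdefk]; module, norm_smul]
    norm_num
  have ht₀ : -⟪h, k - h⟫ / ‖k - h‖ ^ 2 ∈ Set.Icc 0 1 := by
    rw [hinner, hnorm, Set.mem_Icc, div_le_one hS]
    have := le_min_iff.1 hmin
    exact ⟨div_nonneg (by linarith) hS.le, by linarith⟩
  have hLeast : IsLeast ((fun t : ℝ => ‖(t • b + (1 - t) • a) - (t • b' + (1 - t) • a')‖) ''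
      Set.Icc 0 1) (2 * ‖h + (-⟪h, k - h⟫ / ‖k - h‖ ^ 2) • (k - h)‖) := by
    simp_rw [hseg]
    exact ⟨Set.mem_image_of_mem _ ht₀, Set.forall_mem_image.2 fun t _ => by
      gcongr; exact norm_add_smul_at_min_le hv h t⟩
  rw [hLeast.csInf_eq, mul_pow, norm_add_smul_sq_at_min hv, hinner, hnorm]
  field_simp
  ring

/-- Proposition: with `H = ‖h‖²`, `K = ‖k‖²`, `D = h·k`, if `min(H,K) ≥ D` and `h ≠ k`, then
`H + K - 2D > 0` and `δ² = 4(HK - D²)/(H + K - 2D)`. -/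
theorem stmt6 {n : ℕ} (a a' b b' h k : EuclideanSpace ℝ (Fin n))
    (hP : 2 ≤ ‖a - a'‖) (hQ : 2 ≤ ‖b - b'‖)
    (hdefh : h = (2:ℝ)⁻¹ • (a' - a)) (hdefk : k = (2:ℝ)⁻¹ • (b' - b))
    (hmin : ⟪h, k⟫ ≤ min (‖h‖ ^ 2) (‖k‖ ^ 2)) (hne : h ≠ k) :
    0 < ‖h‖ ^ 2 + ‖k‖ ^ 2 - 2 * ⟪h, k⟫ ∧
    (sInf ((fun t : ℝ => ‖(t • b + (1 - t) • a) - (t • b' + (1 - t) • a')‖) ''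
        Set.Icc 0 1)) ^ 2
      = 4 * (‖h‖ ^ 2 * ‖k‖ ^ 2 - ⟪h, k⟫ ^ 2) / (‖h‖ ^ 2 + ‖k‖ ^ 2 - 2 * ⟪h, k⟫) :=
  stmt6_general a a' b b' h k hdefh hdefk hmin hne
end

section
/- Let P=(a,a') and Q=(b,b') be points of F₀(ℝⁿ,2) with h and k linearly independent, and set H=‖h‖², K=‖k‖², D=h·k; assume min(H,K) ≥ D. Then: (i) there exists u ∈ ℝⁿ with ‖u‖ < 1 and h·u = 1 = k·u if and only if δ > 2; (ii) there exists a unique u ∈ ℝⁿ with ‖u‖ ≤ 1 and h·u = 1 = k·u, and that u has ‖u‖ = 1, if and only if δ = 2; (iii) there exists no u ∈ ℝⁿ with ‖u‖ ≤ 1 and h·u = 1 = k·u if and only if δ < 2. -/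
open scoped RealInnerProductSpace

/-- Proposition: for `h`, `k` linearly independent with `min(H,K) ≥ D`, solutions `u` of
`h·u = 1 = k·u` inside or on the unit sphere are governed by the value of `δ`:
(i) a solution with `‖u‖ < 1` exists iff `δ > 2`; (ii) a unique solution with `‖u‖ ≤ 1`
exists, necessarily of norm `1`, iff `δ = 2`; (iii) no solution with `‖u‖ ≤ 1` exists iff
`δ < 2`. -/
theorem stmt7 {n : ℕ} (a a' b b' h k : EuclideanSpace ℝ (Fin n))
    (hP : 2 ≤ ‖a - a'‖) (hQ : 2 ≤ ‖b - b'‖)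
    (hdefh : h = (2:ℝ)⁻¹ • (a' - a)) (hdefk : k = (2:ℝ)⁻¹ • (b' - b))
    (hind : LinearIndependent ℝ ![h, k])
    (hmin : ⟪h, k⟫ ≤ min (‖h‖ ^ 2) (‖k‖ ^ 2)) :
    ((∃ u : EuclideanSpace ℝ (Fin n), ‖u‖ < 1 ∧ ⟪h, u⟫ = 1 ∧ ⟪k, u⟫ = 1)
      ↔ 2 < sInf ((fun t : ℝ => ‖(t • b + (1 - t) • a) - (t • b' + (1 - t) • a')‖) ''
          Set.Icc 0 1)) ∧
    (((∃! u : EuclideanSpace ℝ (Fin n), ‖u‖ ≤ 1 ∧ ⟪h, u⟫ = 1 ∧ ⟪k, u⟫ = 1) ∧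
        ∀ u : EuclideanSpace ℝ (Fin n), ‖u‖ ≤ 1 → ⟪h, u⟫ = 1 → ⟪k, u⟫ = 1 → ‖u‖ = 1)
      ↔ sInf ((fun t : ℝ => ‖(t • b + (1 - t) • a) - (t • b' + (1 - t) • a')‖) ''
          Set.Icc 0 1) = 2) ∧
    ((¬ ∃ u : EuclideanSpace ℝ (Fin n), ‖u‖ ≤ 1 ∧ ⟪h, u⟫ = 1 ∧ ⟪k, u⟫ = 1)
      ↔ sInf ((fun t : ℝ => ‖(t • b + (1 - t) • a) - (t • b' + (1 - t) • a')‖) ''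
          Set.Icc 0 1) < 2) := by
  rw [linearIndependent_fin2] at hind
  simp only [Matrix.cons_val_one, Matrix.head_cons, Matrix.cons_val_zero] at hind
  obtain ⟨hk0, hnh⟩ := hind
  set H := ‖h‖ ^ 2 with hHdef
  set K := ‖k‖ ^ 2 with hKdef
  set D := ⟪h, k⟫ with hDdef
  have hk0' : 0 < ‖k‖ := norm_pos_iff.2 hk0
  have hh0' : 0 < ‖h‖ := by
    rcases eq_or_ne h 0 with rfl | hne
    · exact absurd (by simp) (hnh 0)
    · exact norm_pos_iff.2 hne
  have hD1 : D < ‖h‖ * ‖k‖ := by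
    rw [hDdef, inner_lt_norm_mul_iff_real]
    intro hc
    apply hnh (‖h‖ / ‖k‖)
    rw [div_eq_mul_inv, mul_comm, mul_smul, ← hc, smul_smul, inv_mul_cancel₀ hk0'.ne', one_smul]
  have hD2 : -D < ‖h‖ * ‖k‖ := by
    have h2 : ⟪h, -k⟫ < ‖h‖ * ‖-k‖ := by
      rw [inner_lt_norm_mul_iff_real]
      intro hc
      rw [norm_neg, smul_neg] at hc
      apply hnh (-(‖h‖ / ‖k‖))
      rw [neg_smul, div_eq_mul_inv, mul_comm, mul_smul, ← smul_neg, ← hc, smul_smul,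
        inv_mul_cancel₀ hk0'.ne', one_smul]
    rw [inner_neg_right, norm_neg] at h2
    linarith [h2]
  set G := H * K - D ^ 2 with hGdef
  have hG : 0 < G := by
    have hhk2 : H * K = (‖h‖ * ‖k‖) ^ 2 := by rw [hHdef, hKdef]; ring
    rw [hGdef]
    nlinarith [mul_pos hh0' hk0']
  have hhk : h ≠ k := fun hc => hnh 1 (by simpa using hc.symm)
  have hsub : h - k ≠ 0 := sub_ne_zero.2 hhk
  set E := ‖h - k‖ ^ 2 with hEdef
  have hE0 : 0 < E := pow_pos (norm_pos_iff.2 hsub) 2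
  have hE : E = H + K - 2 * D := by rw [hEdef, norm_sub_sq_real]; ring
  have hHD : D ≤ H := hmin.trans (min_le_left _ _)
  have hKD : D ≤ K := hmin.trans (min_le_right _ _)
  have hG0 : G ≠ 0 := ne_of_gt hG
  have hcomm : ⟪k, h⟫ = D := by rw [hDdef, real_inner_comm]
  -- the minimum norm solution
  set u₀ : EuclideanSpace ℝ (Fin n) := ((K - D)/G) • h + ((H - D)/G) • k with hu₀
  have ihh : ⟪h, u₀⟫ = 1 := by
    rw [hu₀, inner_add_right, real_inner_smul_right, real_inner_smul_right,
      real_inner_self_eq_norm_sq, ← hHdef, ← hDdef]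
    field_simp
    ring
  have ihk : ⟪k, u₀⟫ = 1 := by
    rw [hu₀, inner_add_right, real_inner_smul_right, real_inner_smul_right,
      real_inner_self_eq_norm_sq, hcomm, ← hKdef]
    field_simp
    ring
  have hn0 : ‖u₀‖ ^ 2 = E / G := by
    have e1 : ⟪u₀, u₀⟫ = (K - D)/G + (H - D)/G := by
      nth_rewrite 1 [hu₀]
      rw [inner_add_left, real_inner_smul_left, real_inner_smul_left, ihh, ihk]
      ring
    rw [← real_inner_self_eq_norm_sq, e1, hE]
    field_simp
    ring
  have pyth : ∀ u : EuclideanSpace ℝ (Fin n), ⟪h, u⟫ = 1 → ⟪k, u⟫ = 1 →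
      ‖u‖ ^ 2 = ‖u₀‖ ^ 2 + ‖u - u₀‖ ^ 2 := by
    intro u hu1 hu2
    have horth : ⟪u₀, u - u₀⟫ = 0 := by
      rw [hu₀, inner_add_left, real_inner_smul_left, real_inner_smul_left,
        inner_sub_right, inner_sub_right, hu1, hu2, ihh, ihk]
      ring
    have he : u = u₀ + (u - u₀) := by abel
    calc ‖u‖ ^ 2 = ‖u₀ + (u - u₀)‖ ^ 2 := by rw [← he]
    _ = ‖u₀‖ ^ 2 + 2 * ⟪u₀, u - u₀⟫ + ‖u - u₀‖ ^ 2 := norm_add_sq_real _ _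
    _ = ‖u₀‖ ^ 2 + ‖u - u₀‖ ^ 2 := by rw [horth]; ring
  -- the infimum
  have hfun : ∀ t : ℝ, ‖(t • b + (1 - t) • a) - (t • b' + (1 - t) • a')‖
      = 2 * ‖(1 - t) • h + t • k‖ := by
    intro t
    have hv : (t • b + (1 - t) • a) - (t • b' + (1 - t) • a')
        = (-2 : ℝ) • ((1 - t) • h + t • k) := by
      rw [hdefh, hdefk]
      module
    rw [hv, norm_smul]
    norm_num
  have hq : ∀ t : ℝ, ‖(1 - t) • h + t • k‖ ^ 2 = E * t^2 - 2*(H - D)*t + H := by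
    intro t
    rw [norm_add_sq_real, norm_smul, norm_smul, real_inner_smul_left, real_inner_smul_right,
      mul_pow, mul_pow, Real.norm_eq_abs, Real.norm_eq_abs, sq_abs, sq_abs,
      ← hHdef, ← hKdef, ← hDdef, hE]
    ring
  set S := ((fun t : ℝ => ‖(t • b + (1 - t) • a) - (t • b' + (1 - t) • a')‖) '' Set.Icc 0 1)
    with hS
  set m := 2 * Real.sqrt (G / E) with hm
  have hGE : 0 < G / E := div_pos hG hE0
  have hlow : ∀ y ∈ S, m ≤ y := by
    rintro y ⟨t, ht, rfl⟩
    dsimp only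
    rw [hfun t]
    have h1 : G / E ≤ ‖(1 - t) • h + t • k‖ ^ 2 := by
      rw [hq t, div_le_iff₀ hE0]
      have hid : (E * t^2 - 2*(H - D)*t + H) * E - G = (E*t - (H - D))^2 := by
        rw [hGdef, hE]; ring
      linarith [sq_nonneg (E*t - (H - D)), hid]
    have h2 := Real.sqrt_le_sqrt h1
    rw [Real.sqrt_sq (norm_nonneg _)] at h2
    rw [hm]
    linarith
  have hmem : m ∈ S := by
    refine ⟨(H - D)/E, ⟨div_nonneg (by linarith) hE0.le, ?_⟩, ?_⟩
    · rw [div_le_one hE0]; linarith [hE]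
    · dsimp only
      rw [hfun]
      have hne : H + K - 2*D ≠ 0 := by rw [← hE]; exact hE0.ne'
      have key : ‖(1 - (H - D)/E) • h + ((H - D)/E) • k‖ ^ 2 = G / E := by
        rw [hq, hGdef, hE]
        field_simp
        ring
      rw [hm, ← key, Real.sqrt_sq (norm_nonneg _)]
  have hsinf : sInf S = m :=
    le_antisymm (csInf_le ⟨0, fun y ⟨t, _, hy⟩ => hy ▸ norm_nonneg _⟩ hmem) (le_csInf ⟨m, hmem⟩ hlow)
  -- relation m * ‖u₀‖ = 2
  set ρ := ‖u₀‖ with hρ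
  have hu00 : u₀ ≠ 0 := by
    intro hc
    rw [hc, inner_zero_right] at ihh
    norm_num at ihh
  have hρpos : 0 < ρ := norm_pos_iff.2 hu00
  have hmρsq : (m * ρ) ^ 2 = 4 := by
    rw [mul_pow, hm, mul_pow, Real.sq_sqrt hGE.le, hρ, hn0]
    field_simp
    norm_num
  have hmρ : m * ρ = 2 := by
    have hnn : 0 ≤ m * ρ := mul_nonneg (by rw [hm]; positivity) hρpos.le
    have h4 : (m * ρ - 2) * (m * ρ + 2) = 0 := by linear_combination hmρsq
    rcases mul_eq_zero.1 h4 with h5 | h5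
    · linarith
    · linarith
  have hmpos : 0 < m := by
    have : 0 < Real.sqrt (G / E) := Real.sqrt_pos.2 hGE
    rw [hm]; linarith
  -- norm comparisons
  have hgeρ : ∀ u : EuclideanSpace ℝ (Fin n), ⟪h, u⟫ = 1 → ⟪k, u⟫ = 1 → ρ ≤ ‖u‖ := by
    intro u h1 h2
    have hp := pyth u h1 h2
    have hsq : ρ ^ 2 ≤ ‖u‖ ^ 2 := by rw [hp]; linarith [sq_nonneg ‖u - u₀‖]
    have h3 := Real.sqrt_le_sqrt hsq
    rwa [Real.sqrt_sq hρpos.le, Real.sqrt_sq (norm_nonneg u)] at h3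
  rw [hsinf]
  refine ⟨?_, ?_, ?_⟩
  · -- (i)
    constructor
    · rintro ⟨u, hu1, hu2, hu3⟩
      have := hgeρ u hu2 hu3
      have hρlt : ρ < 1 := lt_of_le_of_lt this hu1
      have := mul_pos hmpos (show (0:ℝ) < 1 - ρ by linarith)
      linarith [hmρ, this]
    · intro hm2
      have hρlt : ρ < 1 := by
        have := mul_pos (show (0:ℝ) < m - 2 by linarith) hρpos
        linarith [hmρ, this]
      exact ⟨u₀, hρlt, ihh, ihk⟩
  · -- (ii)
    constructor
    · rintro ⟨⟨u, ⟨hu1, hu2, hu3⟩, _⟩, hall⟩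
      have hge := hgeρ u hu2 hu3
      have h1 : ρ ≤ 1 := le_trans hge hu1
      have h2 : ¬ (ρ < 1) := by
        intro hlt
        have := hall u₀ hlt.le ihh ihk
        rw [← hρ] at this
        linarith
      have he1 : ρ = 1 := le_antisymm h1 (not_lt.1 h2)
      rw [he1, mul_one] at hmρ
      exact hmρ
    · intro hm2
      have hρ1 : ρ = 1 := by rw [hm2] at hmρ; linarith
      have huniq : ∀ u : EuclideanSpace ℝ (Fin n), ‖u‖ ≤ 1 → ⟪h, u⟫ = 1 → ⟪k, u⟫ = 1 →
          u = u₀ := by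
        intro u hu1 hu2 hu3
        have hp := pyth u hu2 hu3
        rw [hρ1] at hp
        have hle : ‖u‖ ^ 2 ≤ 1 := by
          have := pow_le_pow_left₀ (norm_nonneg u) hu1 2
          simpa using this
        have h0 : ‖u - u₀‖ ^ 2 ≤ 0 := by linarith
        have h1 : ‖u - u₀‖ ^ 2 = 0 := le_antisymm h0 (sq_nonneg _)
        have h2 : ‖u - u₀‖ = 0 := by
          have := sq_eq_zero_iff.1 h1
          exact this
        exact sub_eq_zero.1 (norm_eq_zero.1 h2)
      refine ⟨⟨u₀, ⟨by rw [← hρ, hρ1], ihh, ihk⟩, fun u ⟨hu1, hu2, hu3⟩ => huniq u hu1 hu2 hu3⟩,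
        fun u hu1 hu2 hu3 => ?_⟩
      rw [huniq u hu1 hu2 hu3, ← hρ, hρ1]
  · -- (iii)
    constructor
    · intro hno
      by_contra hlt
      push_neg at hlt
      have hρ1 : ρ ≤ 1 := by
        have := mul_nonneg (show (0:ℝ) ≤ m - 2 by linarith) hρpos.le
        linarith [hmρ, this]
      exact hno ⟨u₀, by rw [← hρ]; exact hρ1, ihh, ihk⟩
    · intro hm2 ⟨u, hu1, hu2, hu3⟩
      have := hgeρ u hu2 hu3
      have hρ1 : ρ ≤ 1 := le_trans this hu1
      have := mul_nonneg hmpos.le (show (0:ℝ) ≤ 1 - ρ by linarith)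
      linarith [hmρ, this]
end

section
/- Let h, k ∈ ℝⁿ with ‖h‖ > 1 and ‖k‖ > 1, suppose k is a scalar multiple of h, and assume there is no u ∈ ℝⁿ with ‖u‖ < 1 and h·u = 1 = k·u. Set S₀=√(‖h‖²−1) and S₁=√(‖k‖²−1). Then the pairs (u,v) of unit vectors satisfying h·u = 1 and k·v = 1 with minimal ‖u−v‖ are exactly the pairs u = h/‖h‖² + (S₀/‖h‖)·w, v = k/‖k‖² + (S₁/‖k‖)·w, where w ranges over all unit vectors with h·w = 0; moreover the value of ‖u−v‖ is the same for every such w. -/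
open scoped RealInnerProductSpace

/-!
By Pythagoras, the unit vectors `u` with `⟪h, u⟫ = 1` form the sphere of radius `S₀/‖h‖` about
`h/‖h‖²` in the hyperplane `h/‖h‖² + hᗮ`: they are the vectors `point h w` with `w` a unit vector
of `hᗮ`. As `k` is parallel to `h`, the same `w`'s parametrise the solutions of `⟪k, v⟫ = 1`, and
the two centres differ by a vector orthogonal to all of them, so
`‖point h w - point k w'‖² = ‖h/‖h‖² - k/‖k‖²‖² + (radius h - radius k)²
  + 2 radius h radius k (1 - ⟪w, w'⟫)`.
This is minimal exactly when `⟪w, w'⟫ = 1`, i.e. `w = w'`, and its minimum does not depend on `w`.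
-/

namespace UnitSlice

variable {E : Type*} [NormedAddCommGroup E]

noncomputable def radius (h : E) : ℝ := Real.sqrt (‖h‖ ^ 2 - 1) / ‖h‖

variable {h : E}

lemma radius_pos (hh : 1 < ‖h‖) : 0 < radius h :=
  div_pos (Real.sqrt_pos.2 (by nlinarith)) (by linarith)

lemma radius_sq (hh : 1 < ‖h‖) : radius h ^ 2 = 1 - (‖h‖ ^ 2)⁻¹ := by
  have : (0 : ℝ) < ‖h‖ := by linarith
  rw [radius, div_pow, Real.sq_sqrt (by nlinarith)]
  field_simp

variable [InnerProductSpace ℝ E]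

noncomputable def point (h w : E) : E := (‖h‖ ^ 2)⁻¹ • h + radius h • w

variable {k u w w' : E}

lemma inner_point (hh : h ≠ 0) (hhw : ⟪h, w⟫ = 0) : ⟪h, point h w⟫ = 1 := by
  rw [point, inner_add_right, real_inner_smul_right, real_inner_smul_right, hhw,
    real_inner_self_eq_norm_sq]
  field_simp
  ring

lemma norm_point (hh : 1 < ‖h‖) (hw : ‖w‖ = 1) (hhw : ⟪h, w⟫ = 0) : ‖point h w‖ = 1 := by
  have hsq : ‖point h w‖ ^ 2 = 1 := by
    rw [point, norm_add_sq_real, real_inner_smul_left, real_inner_smul_right, hhw, norm_smul,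
      norm_smul, Real.norm_eq_abs, Real.norm_eq_abs, abs_of_pos (by positivity),
      abs_of_pos (radius_pos hh), mul_pow, mul_pow, hw, radius_sq hh]
    field_simp
    ring
  exact (pow_eq_one_iff_of_nonneg (norm_nonneg _) two_ne_zero).1 hsq

lemma exists_eq_point (hh : 1 < ‖h‖) (hu : ‖u‖ = 1) (hhu : ⟪h, u⟫ = 1) :
    ∃ w : E, ‖w‖ = 1 ∧ ⟪h, w⟫ = 0 ∧ u = point h w := by
  have hr := (radius_pos hh).ne'
  set a : E := (‖h‖ ^ 2)⁻¹ • h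
  have hha : ⟪h, a⟫ = 1 := by
    rw [real_inner_smul_right, real_inner_self_eq_norm_sq]
    field_simp
  have hua : ⟪u, a⟫ = (‖h‖ ^ 2)⁻¹ := by
    rw [real_inner_smul_right, real_inner_comm, hhu, mul_one]
  have hnorm_a : ‖a‖ ^ 2 = (‖h‖ ^ 2)⁻¹ := by
    rw [norm_smul, Real.norm_eq_abs, abs_of_pos (by positivity)]
    field_simp
  have hnorm_ua : ‖u - a‖ = radius h := by
    have : ‖u - a‖ ^ 2 = radius h ^ 2 := by
      rw [norm_sub_sq_real, hu, hua, hnorm_a, radius_sq hh]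
      ring
    exact (sq_eq_sq₀ (norm_nonneg _) (radius_pos hh).le).1 this
  refine ⟨(radius h)⁻¹ • (u - a), ?_, ?_, ?_⟩
  · rw [norm_smul, hnorm_ua, norm_inv, Real.norm_of_nonneg (radius_pos hh).le, inv_mul_cancel₀ hr]
  · rw [real_inner_smul_right, inner_sub_right, hhu, hha, sub_self, mul_zero]
  · rw [point, smul_inv_smul₀ hr]
    abel

lemma norm_smul_sub_smul_sq (r s : ℝ) (hw : ‖w‖ = 1) (hw' : ‖w'‖ = 1) :
    ‖r • w - s • w'‖ ^ 2 = (r - s) ^ 2 + 2 * r * s * (1 - ⟪w, w'⟫) := by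
  rw [norm_sub_sq_real, norm_smul, norm_smul, real_inner_smul_left, real_inner_smul_right,
    hw, hw', Real.norm_eq_abs, Real.norm_eq_abs, mul_one, mul_one, sq_abs, sq_abs]
  ring

lemma norm_point_sub_point_sq {c : ℝ} (hk : k = c • h) (hhw : ⟪h, w⟫ = 0) (hhw' : ⟪h, w'⟫ = 0)
    (hw : ‖w‖ = 1) (hw' : ‖w'‖ = 1) :
    ‖point h w - point k w'‖ ^ 2 = ‖(‖h‖ ^ 2)⁻¹ • h - (‖k‖ ^ 2)⁻¹ • k‖ ^ 2
      + (radius h - radius k) ^ 2 + 2 * radius h * radius k * (1 - ⟪w, w'⟫) := by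
  have hsplit : point h w - point k w' = ((‖h‖ ^ 2)⁻¹ • h - (‖k‖ ^ 2)⁻¹ • k)
      + (radius h • w - radius k • w') := by
    rw [point, point]
    abel
  have horth : ⟪(‖h‖ ^ 2)⁻¹ • h - (‖k‖ ^ 2)⁻¹ • k, radius h • w - radius k • w'⟫ = 0 := by
    simp only [hk, inner_sub_left, inner_sub_right, real_inner_smul_left, real_inner_smul_right,
      hhw, hhw']
    ring
  rw [hsplit, norm_add_sq_real, horth, norm_smul_sub_smul_sq _ _ hw hw']
  ring

variable {c : ℝ} (hh : 1 < ‖h‖) (hk : 1 < ‖k‖) (hkh : k = c • h)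
include hh hk hkh

lemma norm_point_sub_point_le (hw : ‖w‖ = 1) (hhw : ⟪h, w⟫ = 0) {w₁ w₂ : E} (hw₁ : ‖w₁‖ = 1)
    (hhw₁ : ⟪h, w₁⟫ = 0) (hw₂ : ‖w₂‖ = 1) (hhw₂ : ⟪h, w₂⟫ = 0) :
    ‖point h w - point k w‖ ≤ ‖point h w₁ - point k w₂‖ := by
  refine (sq_le_sq₀ (norm_nonneg _) (norm_nonneg _)).1 ?_
  rw [norm_point_sub_point_sq hkh hhw hhw hw hw, norm_point_sub_point_sq hkh hhw₁ hhw₂ hw₁ hw₂,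
    real_inner_self_eq_norm_sq, hw]
  have := real_inner_le_norm w₁ w₂
  rw [hw₁, hw₂, one_mul] at this
  nlinarith [mul_pos (radius_pos hh) (radius_pos hk)]

lemma eq_of_norm_point_sub_point_le (hw : ‖w‖ = 1) (hhw : ⟪h, w⟫ = 0) (hw' : ‖w'‖ = 1)
    (hhw' : ⟪h, w'⟫ = 0) (hle : ‖point h w - point k w'‖ ≤ ‖point h w - point k w‖) :
    w = w' := by
  have hsq := (sq_le_sq₀ (norm_nonneg _) (norm_nonneg _)).2 hle
  rw [norm_point_sub_point_sq hkh hhw hhw' hw hw', norm_point_sub_point_sq hkh hhw hhw hw hw,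
    real_inner_self_eq_norm_sq, hw] at hsq
  have hle_one : ⟪w, w'⟫ ≤ 1 := by simpa [hw, hw'] using real_inner_le_norm w w'
  refine (inner_eq_one_iff_of_norm_eq_one hw hw').1 (le_antisymm hle_one ?_)
  nlinarith [mul_pos (radius_pos hh) (radius_pos hk)]

end UnitSlice

open UnitSlice

theorem stmt9_general {n : ℕ} (h k : EuclideanSpace ℝ (Fin n))
    (hh : 1 < ‖h‖) (hk : 1 < ‖k‖) (hpar : ∃ c : ℝ, k = c • h) :
    (∀ u v : EuclideanSpace ℝ (Fin n),
      (‖u‖ = 1 ∧ ‖v‖ = 1 ∧ ⟪h, u⟫ = 1 ∧ ⟪k, v⟫ = 1 ∧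
        ∀ u' v' : EuclideanSpace ℝ (Fin n),
          ‖u'‖ = 1 → ‖v'‖ = 1 → ⟪h, u'⟫ = 1 → ⟪k, v'⟫ = 1 → ‖u - v‖ ≤ ‖u' - v'‖)
      ↔ ∃ w : EuclideanSpace ℝ (Fin n), ‖w‖ = 1 ∧ ⟪h, w⟫ = 0 ∧
          u = (‖h‖ ^ 2)⁻¹ • h + (Real.sqrt (‖h‖ ^ 2 - 1) / ‖h‖) • w ∧
          v = (‖k‖ ^ 2)⁻¹ • k + (Real.sqrt (‖k‖ ^ 2 - 1) / ‖k‖) • w) ∧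
    (∀ w w' : EuclideanSpace ℝ (Fin n),
      ‖w‖ = 1 → ⟪h, w⟫ = 0 → ‖w'‖ = 1 → ⟪h, w'⟫ = 0 →
      ‖((‖h‖ ^ 2)⁻¹ • h + (Real.sqrt (‖h‖ ^ 2 - 1) / ‖h‖) • w)
          - ((‖k‖ ^ 2)⁻¹ • k + (Real.sqrt (‖k‖ ^ 2 - 1) / ‖k‖) • w)‖
        = ‖((‖h‖ ^ 2)⁻¹ • h + (Real.sqrt (‖h‖ ^ 2 - 1) / ‖h‖) • w')
          - ((‖k‖ ^ 2)⁻¹ • k + (Real.sqrt (‖k‖ ^ 2 - 1) / ‖k‖) • w')‖) := by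
  obtain ⟨c, hkh⟩ := hpar
  have hc : c ≠ 0 := by
    rintro rfl
    simp [hkh] at hk
    linarith
  have hperp (w : EuclideanSpace ℝ (Fin n)) : ⟪k, w⟫ = 0 ↔ ⟪h, w⟫ = 0 := by
    simp [hkh, real_inner_smul_left, hc]
  have hk0 : k ≠ 0 := norm_pos_iff.1 (by linarith)
  have hh0 : h ≠ 0 := norm_pos_iff.1 (by linarith)
  refine ⟨fun u v => ⟨?_, ?_⟩, fun w w' hw hhw hw' hhw' =>
    le_antisymm (norm_point_sub_point_le hh hk hkh hw hhw hw' hhw' hw' hhw')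
      (norm_point_sub_point_le hh hk hkh hw' hhw' hw hhw hw hhw)⟩
  · rintro ⟨hu, hv, hhu, hkv, hmin⟩
    obtain ⟨w, hw, hhw, rfl⟩ := exists_eq_point hh hu hhu
    obtain ⟨w', hw', hkw', rfl⟩ := exists_eq_point hk hv hkv
    have hle := hmin _ (point k w) hu (norm_point hk hw ((hperp w).2 hhw)) hhu
      (inner_point hk0 ((hperp w).2 hhw))
    obtain rfl := eq_of_norm_point_sub_point_le hh hk hkh hw hhw hw' ((hperp w').1 hkw') hle
    exact ⟨w, hw, hhw, rfl, rfl⟩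
  · rintro ⟨w, hw, hhw, rfl, rfl⟩
    refine ⟨norm_point hh hw hhw, norm_point hk hw ((hperp w).2 hhw), inner_point hh0 hhw,
      inner_point hk0 ((hperp w).2 hhw), fun u' v' hu' hv' hhu' hkv' => ?_⟩
    obtain ⟨w₁, hw₁, hhw₁, rfl⟩ := exists_eq_point hh hu' hhu'
    obtain ⟨w₂, hw₂, hkw₂, rfl⟩ := exists_eq_point hk hv' hkv'
    exact norm_point_sub_point_le hh hk hkh hw hhw hw₁ hhw₁ hw₂ ((hperp w₂).1 hkw₂)

/-- Proposition (parallel case): for `h, k` with `‖h‖ > 1`, `‖k‖ > 1`, `k` a scalar multiple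
of `h`, and no common solution `u` of `h·u = 1 = k·u` with `‖u‖ < 1`, the pairs `(u,v)` of
unit vectors with `h·u = 1`, `k·v = 1` minimizing `‖u - v‖` are exactly
`u = h/‖h‖² + (S₀/‖h‖)w`, `v = k/‖k‖² + (S₁/‖k‖)w` for unit vectors `w ⟂ h`; moreover
`‖u - v‖` has the same value for every such `w`. -/
theorem stmt9 {n : ℕ} (hn : 2 ≤ n) (h k : EuclideanSpace ℝ (Fin n))
    (hh : 1 < ‖h‖) (hk : 1 < ‖k‖) (hpar : ∃ c : ℝ, k = c • h)
    (hno : ¬ ∃ u : EuclideanSpace ℝ (Fin n), ‖u‖ < 1 ∧ ⟪h, u⟫ = 1 ∧ ⟪k, u⟫ = 1) :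
    (∀ u v : EuclideanSpace ℝ (Fin n),
      (‖u‖ = 1 ∧ ‖v‖ = 1 ∧ ⟪h, u⟫ = 1 ∧ ⟪k, v⟫ = 1 ∧
        ∀ u' v' : EuclideanSpace ℝ (Fin n),
          ‖u'‖ = 1 → ‖v'‖ = 1 → ⟪h, u'⟫ = 1 → ⟪k, v'⟫ = 1 → ‖u - v‖ ≤ ‖u' - v'‖)
      ↔ ∃ w : EuclideanSpace ℝ (Fin n), ‖w‖ = 1 ∧ ⟪h, w⟫ = 0 ∧
          u = (‖h‖ ^ 2)⁻¹ • h + (Real.sqrt (‖h‖ ^ 2 - 1) / ‖h‖) • w ∧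
          v = (‖k‖ ^ 2)⁻¹ • k + (Real.sqrt (‖k‖ ^ 2 - 1) / ‖k‖) • w) ∧
    (∀ w w' : EuclideanSpace ℝ (Fin n),
      ‖w‖ = 1 → ⟪h, w⟫ = 0 → ‖w'‖ = 1 → ⟪h, w'⟫ = 0 →
      ‖((‖h‖ ^ 2)⁻¹ • h + (Real.sqrt (‖h‖ ^ 2 - 1) / ‖h‖) • w)
          - ((‖k‖ ^ 2)⁻¹ • k + (Real.sqrt (‖k‖ ^ 2 - 1) / ‖k‖) • w)‖
        = ‖((‖h‖ ^ 2)⁻¹ • h + (Real.sqrt (‖h‖ ^ 2 - 1) / ‖h‖) • w')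
          - ((‖k‖ ^ 2)⁻¹ • k + (Real.sqrt (‖k‖ ^ 2 - 1) / ‖k‖) • w')‖) :=
  stmt9_general h k hh hk hpar
end

section
/- Let a, a', b, b' ∈ ℝⁿ with a ≠ a' and b ≠ b', and suppose d((a,a'),(b,b')) ≤ d((a,a'),(b',b)), where d is the Euclidean distance on ℝⁿ × ℝⁿ. Then for every t ∈ [0,1], (1−t)a + tb ≠ (1−t)a' + tb'; that is, the linear path (1−t)(a,a') + t(b,b') lies in F(ℝⁿ,2). Consequently this linear path is a geodesic in the metric d_U on the unordered configuration space. -/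
open scoped RealInnerProductSpace

/-- The Euclidean distance on `ℝⁿ × ℝⁿ`. -/
noncomputable def dE {n : ℕ} (p q : EuclideanSpace ℝ (Fin n) × EuclideanSpace ℝ (Fin n)) : ℝ :=
  Real.sqrt (‖p.1 - q.1‖ ^ 2 + ‖p.2 - q.2‖ ^ 2)

/-- The distance `d_U` on unordered pairs: the minimum of the Euclidean distance over the
two orderings of the second pair. -/
noncomputable def dU {n : ℕ} (p q : EuclideanSpace ℝ (Fin n) × EuclideanSpace ℝ (Fin n)) : ℝ :=
  min (dE p q) (dE p (q.2, q.1))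

lemma sqdiff {n : ℕ} (x x' y y' : EuclideanSpace ℝ (Fin n)) :
    ‖x - y'‖ ^ 2 + ‖x' - y‖ ^ 2 - (‖x - y‖ ^ 2 + ‖x' - y'‖ ^ 2)
      = 2 * ⟪x - x', y - y'⟫ := by
  simp only [inner_sub_left, inner_sub_right, @norm_sub_sq_real]
  ring

lemma dE_le_of_inner {n : ℕ} (x x' y y' : EuclideanSpace ℝ (Fin n))
    (h : 0 ≤ ⟪x - x', y - y'⟫) :
    dE (x, x') (y, y') ≤ dE (x, x') (y', y) := by
  have h2 := sqdiff x x' y y'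
  exact Real.sqrt_le_sqrt (by nlinarith)

lemma dE_smul {n : ℕ} (s t : ℝ) (a b a' b' : EuclideanSpace ℝ (Fin n)) :
    dE ((1-s)•a+s•b, (1-s)•a'+s•b') ((1-t)•a+t•b, (1-t)•a'+t•b')
      = |t - s| * dE (a, a') (b, b') := by
  have h1 : (1-s)•a+s•b - ((1-t)•a+t•b) = (t-s) • (a - b) := by module
  have h2 : (1-s)•a'+s•b' - ((1-t)•a'+t•b') = (t-s) • (a' - b') := by module
  unfold dE
  simp only [h1, h2, norm_smul]
  rw [show (‖(t-s)‖*‖a-b‖)^2 + (‖(t-s)‖*‖a'-b'‖)^2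
      = (t-s)^2 * (‖a-b‖^2+‖a'-b'‖^2) by
    simp only [Real.norm_eq_abs, mul_pow, sq_abs]; ring]
  rw [Real.sqrt_mul (sq_nonneg _), Real.sqrt_sq_eq_abs]

/-- If `a ≠ a'`, `b ≠ b'` and `d((a,a'),(b,b')) ≤ d((a,a'),(b',b))`, then the linear path
`(1-t)(a,a') + t(b,b')` lies in `F(ℝⁿ,2)`, and it is a (constant-speed minimal) geodesic
for the metric `d_U` on the unordered configuration space. -/
theorem stmt16 {n : ℕ} (a a' b b' : EuclideanSpace ℝ (Fin n)) (ha : a ≠ a') (hb : b ≠ b')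
    (hle : dE (a, a') (b, b') ≤ dE (a, a') (b', b)) :
    (∀ t ∈ Set.Icc (0:ℝ) 1, (1 - t) • a + t • b ≠ (1 - t) • a' + t • b') ∧
    (∀ s ∈ Set.Icc (0:ℝ) 1, ∀ t ∈ Set.Icc (0:ℝ) 1,
      dU ((1 - s) • a + s • b, (1 - s) • a' + s • b')
          ((1 - t) • a + t • b, (1 - t) • a' + t • b')
        = |t - s| * dU (a, a') (b, b')) := by
  have hAB : ‖a - b‖ ^ 2 + ‖a' - b'‖ ^ 2 ≤ ‖a - b'‖ ^ 2 + ‖a' - b‖ ^ 2 := by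
    have h := hle
    unfold dE at h
    simp only at h
    exact (Real.sqrt_le_sqrt_iff (by positivity)).mp h
  have hinner : 0 ≤ ⟪a - a', b - b'⟫ := by
    have := sqdiff a a' b b'
    nlinarith
  have huu : (0:ℝ) < ‖a - a'‖ ^ 2 :=
    pow_pos (norm_pos_iff.mpr (sub_ne_zero.mpr ha)) 2
  have hvv : (0:ℝ) < ‖b - b'‖ ^ 2 :=
    pow_pos (norm_pos_iff.mpr (sub_ne_zero.mpr hb)) 2
  have inner_expand : ∀ σ τ : ℝ,
      ⟪σ • (a - a') + (1 - σ) • (b - b'), τ • (a - a') + (1 - τ) • (b - b')⟫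
        = σ * τ * ‖a - a'‖ ^ 2 + (1 - σ) * (1 - τ) * ‖b - b'‖ ^ 2
          + (σ * (1 - τ) + (1 - σ) * τ) * ⟪a - a', b - b'⟫ := by
    intro σ τ
    simp only [inner_add_left, inner_add_right, real_inner_smul_left, real_inner_smul_right,
      real_inner_self_eq_norm_sq, real_inner_comm (b - b') (a - a')]
    ring
  constructor
  · rintro t ⟨ht0, ht1⟩ heq
    have hw : (1 - t) • (a - a') + (1 - (1 - t)) • (b - b') = 0 := by
      rw [show (1-t) • (a - a') + (1 - (1-t)) • (b - b')
          = ((1-t) • a + t • b) - ((1-t) • a' + t • b') by module, heq, sub_self]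
    have h0 : ⟪(1 - t) • (a - a') + (1 - (1 - t)) • (b - b'),
        (1 - t) • (a - a') + (1 - (1 - t)) • (b - b')⟫ = 0 := by
      rw [hw, inner_zero_left]
    rw [inner_expand] at h0
    have key : (1-t)^2 * ‖a - a'‖^2 + t^2 * ‖b - b'‖^2 ≤ 0 := by
      nlinarith [mul_nonneg (mul_nonneg (sub_nonneg.mpr ht1) ht0) hinner]
    have hA : (1-t)^2 ≤ 0 := by
      nlinarith [mul_nonneg (sq_nonneg t) hvv.le]
    have hB : t^2 ≤ 0 := by
      nlinarith [mul_nonneg (sq_nonneg (1-t)) huu.le]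
    nlinarith [sq_nonneg (1 - 2*t)]
  · rintro s ⟨hs0, hs1⟩ t ⟨ht0, ht1⟩
    have hd1 : dE ((1-s)•a+s•b, (1-s)•a'+s•b') ((1-t)•a+t•b, (1-t)•a'+t•b')
        = |t - s| * dE (a, a') (b, b') := dE_smul s t a b a' b'
    have hps : ((1-s)•a+s•b) - ((1-s)•a'+s•b')
        = (1-s) • (a - a') + (1 - (1-s)) • (b - b') := by module
    have hpt : ((1-t)•a+t•b) - ((1-t)•a'+t•b')
        = (1-t) • (a - a') + (1 - (1-t)) • (b - b') := by module
    have hpos : 0 ≤ ⟪((1-s)•a+s•b) - ((1-s)•a'+s•b'),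
        ((1-t)•a+t•b) - ((1-t)•a'+t•b')⟫ := by
      rw [hps, hpt, inner_expand]
      have h1s : (0:ℝ) ≤ 1 - s := sub_nonneg.mpr hs1
      have h1t : (0:ℝ) ≤ 1 - t := sub_nonneg.mpr ht1
      have e1 : (0:ℝ) ≤ (1-s) * (1-t) * ‖a - a'‖^2 :=
        mul_nonneg (mul_nonneg h1s h1t) huu.le
      have e2 : (0:ℝ) ≤ (1 - (1-s)) * (1 - (1-t)) * ‖b - b'‖^2 := by
        apply mul_nonneg (mul_nonneg (by linarith) (by linarith)) hvv.le
      have e3 : (0:ℝ) ≤ ((1-s) * (1 - (1-t)) + (1 - (1-s)) * (1-t)) * ⟪a - a', b - b'⟫ := by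
        apply mul_nonneg _ hinner
        have := mul_nonneg h1s ht0
        have := mul_nonneg hs0 h1t
        linarith
      linarith
    have hd2 : dE ((1-s)•a+s•b, (1-s)•a'+s•b') ((1-t)•a+t•b, (1-t)•a'+t•b')
        ≤ dE ((1-s)•a+s•b, (1-s)•a'+s•b') ((1-t)•a'+t•b', (1-t)•a+t•b) :=
      dE_le_of_inner _ _ _ _ hpos
    unfold dU
    simp only
    rw [min_eq_left hd2, min_eq_left hle, hd1]
end
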